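/- Let φ be a continuous flow on a locally compact metric space X and M a nonempty compact attractor, i.e., the region of attraction A(M) = {x : Ω(x) ≠ ∅, Ω(x) ⊆ M} is a neighborhood of M. Then A(M) is open. -/
import Mathlib


open Filter Topology Metric Set

/-- The ω-limit set of `x` under the flow `φ`. -/
def omegaSet {X : Type*} [MetricSpace X] (φ : X → ℝ → X) (x : X) : Set X :=
  {y | ∃ t : ℕ → ℝ, Tendsto t atTop atTop ∧ Tendsto (fun n => φ x (t n)) atTop (𝓝 y)}

lemma omegaSet_shift {X : Type*} [MetricSpace X] (φ : X → ℝ → X)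
    (hφadd : ∀ x s t, φ (φ x s) t = φ x (s + t)) (x : X) (s : ℝ) :
    omegaSet φ (φ x s) = omegaSet φ x := by
  ext y
  constructor
  · rintro ⟨t, ht, hconv⟩
    refine ⟨fun n => s + t n, tendsto_atTop_add_const_left _ _ ht, ?_⟩
    simpa [hφadd] using hconv
  · rintro ⟨t, ht, hconv⟩
    refine ⟨fun n => t n - s, tendsto_atTop_add_const_right _ (-s) ht, ?_⟩
    have : ∀ n, φ (φ x s) (t n - s) = φ x (t n) := by
      intro n; rw [hφadd]; ring_nf
    simpa [this] using hconv

theorem stmt_16 {X : Type*} [MetricSpace X] [LocallyCompactSpace X] (φ : X → ℝ → X)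
    (M : Set X) (hMne : M.Nonempty) (hMc : IsCompact M)
    (hφ0 : ∀ x, φ x 0 = x)
    (hφadd : ∀ x s t, φ (φ x s) t = φ x (s + t))
    (hφc : Continuous fun p : X × ℝ => φ p.1 p.2)
    (hattr : ∃ V : Set X, IsOpen V ∧ M ⊆ V ∧
      V ⊆ {x : X | (omegaSet φ x).Nonempty ∧ omegaSet φ x ⊆ M}) :
    IsOpen {x : X | (omegaSet φ x).Nonempty ∧ omegaSet φ x ⊆ M} := by
  obtain ⟨V, hVopen, hMV, hVA⟩ := hattr
  rw [isOpen_iff_mem_nhds]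
  rintro x ⟨⟨y, t, ht, hconv⟩, hsub⟩
  -- y ∈ Ω(x) ⊆ M ⊆ V; eventually φ x (t n) ∈ V
  have hyV : V ∈ 𝓝 y := hVopen.mem_nhds (hMV (hsub ⟨t, ht, hconv⟩))
  obtain ⟨n, hn⟩ := (hconv.eventually_mem hyV).exists
  -- U := preimage of V under φ · (t n)
  have hcont : Continuous fun z => φ z (t n) :=
    hφc.comp (continuous_id.prodMk continuous_const)
  have hU : IsOpen ((fun z => φ z (t n)) ⁻¹' V) := hVopen.preimage hcont
  have hxU : x ∈ (fun z => φ z (t n)) ⁻¹' V := hn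
  refine Filter.mem_of_superset (hU.mem_nhds hxU) ?_
  intro z hz
  have := hVA hz
  simp only [Set.mem_setOf_eq] at this ⊢; rwa [omegaSet_shift φ hφadd z (t n)] at this
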